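/- arXiv:2410.00514 — 2 statements merged into one kernel-verified Lean document; each statement's English description precedes it below -/
import Mathlib

section
/- If a flow φ on a compact metric space is expansive in the sense of Bowen–Walters, then for every ε > 0 the set of fixed points of φ is finite and each fixed point is an isolated point of X. -/
open Metric Set Filter Topology

variable {X : Type*}

/-- A reparametrization: an increasing homeomorphism of `ℝ` fixing `0`. -/
def IsRep (h : ℝ → ℝ) : Prop :=
  StrictMono h ∧ Function.Surjective h ∧ h 0 = 0

/-- A map that agrees on `[0,∞)` with some reparametrization. -/
def IsRepPlus (α : ℝ → ℝ) : Prop :=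
  ∃ h : ℝ → ℝ, IsRep h ∧ ∀ t ≥ (0:ℝ), α t = h t

/-- A map that agrees on `(-∞,0]` with some reparametrization. -/
def IsRepMinus (α : ℝ → ℝ) : Prop :=
  ∃ h : ℝ → ℝ, IsRep h ∧ ∀ t ≤ (0:ℝ), α t = h t

/-- `φ_{[a,b]}(S)`, the saturation of a set `S` by flow times in `[a,b]`. -/
def flowSeg [MetricSpace X] (φ : Flow ℝ X) (a b : ℝ) (S : Set X) : Set X :=
  {z | ∃ t ∈ Set.Icc a b, ∃ y ∈ S, z = φ t y}

/-- The flow has no fixed points (is regular). -/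
def NoFixedPoints [MetricSpace X] (φ : Flow ℝ X) : Prop :=
  ∀ x : X, ∃ t : ℝ, φ t x ≠ x

/-- A field of transversal sections of time `τ` for the flow `φ`. -/
structure SecField [MetricSpace X] (φ : Flow ℝ X) (τ : ℝ) where
  H : X → Set X
  τ' : ℝ
  r : ℝ
  τ'_pos : 0 < τ'
  r_pos : 0 < r
  compactH : ∀ x : X, IsCompact (H x)
  mem_self : ∀ x : X, x ∈ H x
  cover : ∀ x : X, Metric.closedBall x r ⊆ flowSeg φ (-τ') τ' (H x)
  unique_hit : ∀ x : X, ∀ y ∈ H x, H x ∩ flowSeg φ (-τ') τ' {y} = {y}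
  inj : ∀ x : X, Set.InjOn (fun p : ℝ × X => φ p.1 p.2) (Set.Icc (-τ) τ ×ˢ H x)

/-- Continuity of the field of sections with respect to the Hausdorff distance. -/
def SecFieldContinuous [MetricSpace X] {τ : ℝ} (φ : Flow ℝ X) (F : SecField φ τ) : Prop :=
  ∀ x : X, Filter.Tendsto (fun y => Metric.hausdorffDist (F.H y) (F.H x)) (nhds x) (nhds 0)

/-- The sectionally geometric ε-stable set `T^s_ε(x)`. -/
def Tstab [MetricSpace X] {τ : ℝ} (φ : Flow ℝ X) (F : SecField φ τ) (ε : ℝ) (x : X) : Set X :=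
  {y | ∃ α : ℝ → ℝ, IsRepPlus α ∧ ∀ t ≥ (0:ℝ),
    φ (α t) y ∈ F.H (φ t x) ∩ Metric.closedBall (φ t x) ε}

/-- The sectionally geometric ε-unstable set `T^u_ε(x)`. -/
def Tunstab [MetricSpace X] {τ : ℝ} (φ : Flow ℝ X) (F : SecField φ τ) (ε : ℝ) (x : X) : Set X :=
  {y | ∃ α : ℝ → ℝ, IsRepMinus α ∧ ∀ t ≤ (0:ℝ),
    φ (α t) y ∈ F.H (φ t x) ∩ Metric.closedBall (φ t x) ε}

/-- A stable point: each `H_δ(x)` is contained in `T^s_ε(x)` for suitable `δ`. -/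
def StablePt [MetricSpace X] {τ : ℝ} (φ : Flow ℝ X) (F : SecField φ τ) (x : X) : Prop :=
  ∀ ε > (0:ℝ), ∃ δ > (0:ℝ), F.H x ∩ Metric.closedBall x δ ⊆ Tstab φ F ε x

/-- A stable point for the reversed flow. -/
def StablePtNeg [MetricSpace X] {τ : ℝ} (φ : Flow ℝ X) (F : SecField φ τ) (x : X) : Prop :=
  ∀ ε > (0:ℝ), ∃ δ > (0:ℝ), F.H x ∩ Metric.closedBall x δ ⊆ Tunstab φ F ε x

/-- A continuum of reparametrizations `α ∈ 𝓗(A)`: to each point of `A` it assigns a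
continuous function of time, continuously in the point, with the base point getting the
identity. -/
structure ContRep [MetricSpace X] (A : Set X) where
  α : X → ℝ → ℝ
  base : X
  base_mem : base ∈ A
  base_id : ∀ t : ℝ, α base t = t
  cont : ContinuousOn (fun p : X × ℝ => α p.1 p.2) (A ×ˢ (Set.univ : Set ℝ))

/-- `𝒳^t_α(A)`, the image of the continuum `A` at time `t` under the individual
reparametrizations. -/
def repImage [MetricSpace X] (φ : Flow ℝ X) {A : Set X} (β : ContRep A) (t : ℝ) : Set X :=
  (fun y => φ (β.α y t) y) '' A

/-- Continuum-wise expansiveness of a flow. -/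
def CwExpansive [MetricSpace X] (φ : Flow ℝ X) : Prop :=
  ∀ ε > (0:ℝ), ∃ δ > (0:ℝ), ∀ A : Set X, IsCompact A → IsConnected A → ∀ β : ContRep A,
    (∀ t : ℝ, Metric.diam (repImage φ β t) < δ) →
    ∀ y ∈ A, ∃ s : ℝ, |s| < ε ∧ y = φ s β.base

/-- The family `𝒯^s_ε` of sectionally geometric ε-stable continua. -/
def memTsFam [MetricSpace X] {τ : ℝ} (φ : Flow ℝ X) (F : SecField φ τ) (ε : ℝ)
    (A : Set X) : Prop :=
  IsCompact A ∧ IsConnected A ∧ ∃ β : ContRep A, ∀ t ≥ (0:ℝ),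
    repImage φ β t ⊆ F.H (φ t β.base) ∩ Metric.closedBall (φ t β.base) ε

/-- The family `𝒯^u_ε` of sectionally geometric ε-unstable continua. -/
def memTuFam [MetricSpace X] {τ : ℝ} (φ : Flow ℝ X) (F : SecField φ τ) (ε : ℝ)
    (A : Set X) : Prop :=
  IsCompact A ∧ IsConnected A ∧ ∃ β : ContRep A, ∀ t ≤ (0:ℝ),
    repImage φ β t ⊆ F.H (φ t β.base) ∩ Metric.closedBall (φ t β.base) ε

/-- A recurrent point: `x ∈ ω(x)`. -/
def RecurrentPt [MetricSpace X] (φ : Flow ℝ X) (x : X) : Prop :=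
  ∃ u : ℕ → ℝ, Filter.Tendsto u Filter.atTop Filter.atTop ∧
    Filter.Tendsto (fun n => φ (u n) x) Filter.atTop (nhds x)

/-- A periodic point. -/
def PeriodicPt [MetricSpace X] (φ : Flow ℝ X) (x : X) : Prop :=
  ∃ T > (0:ℝ), φ T x = x

/-- `y` belongs to the α-limit set of `x`. -/
def AlphaLimitPt [MetricSpace X] (φ : Flow ℝ X) (x y : X) : Prop :=
  ∃ u : ℕ → ℝ, Filter.Tendsto u Filter.atTop Filter.atBot ∧
    Filter.Tendsto (fun n => φ (u n) x) Filter.atTop (nhds y)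

/-- Bowen–Walters expansiveness of a flow. -/
def BWExpansive [MetricSpace X] (φ : Flow ℝ X) : Prop :=
  ∀ ε > (0:ℝ), ∃ δ > (0:ℝ), ∀ x y : X, ∀ α : ℝ → ℝ, IsRep α →
    (∀ t : ℝ, dist (φ (α t) y) (φ t x) ≤ δ) → ∃ s : ℝ, |s| < ε ∧ y = φ s x

/-- The bump reparametrization: identity minus 2 outside `[-3,3]`, with `α 0 = 0`. -/
noncomputable def bumpRep (t : ℝ) : ℝ := max (t - 2) (min (5*t/3) (t/3))

lemma bumpRep_isRep : IsRep bumpRep := by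
  have hsm : StrictMono bumpRep := by
    intro a b hab
    exact max_lt_max (by linarith) (min_lt_min (by linarith) (by linarith))
  refine ⟨hsm, ?_, by norm_num [bumpRep]⟩
  intro c
  rcases le_total c (-5) with h | h
  · exact ⟨c + 2, by rw [bumpRep, min_eq_left (by linarith), max_eq_left (by linarith)]; ring⟩
  rcases le_total c 0 with h' | h'
  · exact ⟨3*c/5, by rw [bumpRep]; rw [show 5*(3*c/5)/3 = c by ring,
      show (3*c/5)/3 = c/5 by ring, min_eq_left (by linarith), max_eq_right (by linarith)]⟩
  rcases le_total c 1 with h'' | h''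
  · exact ⟨3*c, by rw [bumpRep]; rw [show 5*(3*c)/3 = 5*c by ring,
      show (3*c)/3 = c by ring, min_eq_right (by linarith), max_eq_right (by linarith)]⟩
  · exact ⟨c + 2, by rw [bumpRep, min_eq_right (by linarith), max_eq_left (by linarith)]; ring⟩

lemma bumpRep_eq {t : ℝ} (ht : t ≤ -3 ∨ 3 ≤ t) : bumpRep t = t - 2 := by
  rcases ht with ht | ht
  · rw [bumpRep, min_eq_left (by linarith), max_eq_left (by linarith)]
  · rw [bumpRep, min_eq_right (by linarith), max_eq_left (by linarith)]

lemma bumpRep_bounds {t : ℝ} (ht : -3 ≤ t ∧ t ≤ 3) : -5 ≤ bumpRep t ∧ bumpRep t ≤ 1 := by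
  constructor
  · exact le_trans (by linarith [ht.1]) (le_max_left _ _)
  · exact max_le (by linarith [ht.2]) (le_trans (min_le_right _ _) (by linarith [ht.2]))

lemma key_lemma [MetricSpace X] (φ : Flow ℝ X) {δ : ℝ}
    (hδ' : ∀ x y : X, ∀ α : ℝ → ℝ, IsRep α →
      (∀ t : ℝ, dist (φ (α t) y) (φ t x) ≤ δ) → ∃ s : ℝ, |s| < 1 ∧ y = φ s x)
    {x₀ : X} (hx₀ : ∀ t : ℝ, φ t x₀ = x₀) {y : X}
    (hy : ∀ t : ℝ, -5 ≤ t → t ≤ 5 → dist (φ t y) x₀ ≤ δ / 2) : y = x₀ := by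
  have hδ0 : 0 ≤ δ := by
    have h0 := hy 0 (by norm_num) (by norm_num)
    have := dist_nonneg (x := φ (0:ℝ) y) (y := x₀)
    linarith
  -- Step 1: `y` is periodic with period in (1,3).
  obtain ⟨s, hs, h2⟩ := hδ' y (φ 2 y) bumpRep bumpRep_isRep (by
    intro t
    have hadd : φ (bumpRep t) (φ 2 y) = φ (bumpRep t + 2) y := by
      rw [← Flow.map_add]
    rw [hadd]
    rcases le_or_gt t (-3) with ht | ht
    · rw [bumpRep_eq (Or.inl ht), show t - 2 + 2 = t by ring]
      simpa using hδ0
    rcases le_or_gt 3 t with ht' | ht'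
    · rw [bumpRep_eq (Or.inr ht'), show t - 2 + 2 = t by ring]
      simpa using hδ0
    · have hb := bumpRep_bounds ⟨le_of_lt ht, le_of_lt ht'⟩
      have h1 : dist (φ (bumpRep t + 2) y) x₀ ≤ δ / 2 := hy _ (by linarith [hb.1]) (by linarith [hb.2])
      have h2 : dist (φ t y) x₀ ≤ δ / 2 := hy t (by linarith) (by linarith)
      calc dist (φ (bumpRep t + 2) y) (φ t y)
          ≤ dist (φ (bumpRep t + 2) y) x₀ + dist (φ t y) x₀ := dist_triangle_right _ _ _
        _ ≤ δ := by linarith)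
  have hper : φ (2 - s) y = y := by
    have : φ (-s) (φ 2 y) = φ (-s) (φ s y) := by rw [← h2]
    rw [← Flow.map_add, ← Flow.map_add] at this
    rw [show (2:ℝ) - s = -s + 2 by ring]
    simpa using this
  have hppos : (0:ℝ) < 2 - s := by
    rcases abs_lt.mp hs with ⟨h1, h2⟩; linarith
  have hple : (2:ℝ) - s ≤ 3 := by
    rcases abs_lt.mp hs with ⟨h1, h2⟩; linarith
  -- Step 2: the whole orbit of `y` stays δ/2-close to x₀.
  have hfull : ∀ t : ℝ, dist (φ t y) x₀ ≤ δ / 2 := by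
    have hP : Function.Periodic (fun t => φ t y) (2 - s) := by
      intro t
      simp only
      rw [Flow.map_add, hper]
    intro t
    obtain ⟨t', ht', heq⟩ := hP.exists_mem_Ico₀ hppos t
    rw [show φ t y = φ t' y from heq]
    exact hy t' (by linarith [ht'.1]) (by linarith [ht'.2.le, hple])
  -- Step 3: expansiveness with the identity reparametrization.
  obtain ⟨s', _, h'⟩ := hδ' x₀ y id ⟨strictMono_id, Function.surjective_id, rfl⟩ (by
    intro t
    simp only [id_eq, hx₀ t]
    have := hfull t
    linarith)
  rw [h', hx₀]

theorem stmt6' [MetricSpace X] [CompactSpace X] (φ : Flow ℝ X)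
    (hexp : ∀ ε > (0:ℝ), ∃ δ > (0:ℝ), ∀ x y : X, ∀ α : ℝ → ℝ, IsRep α →
      (∀ t : ℝ, dist (φ (α t) y) (φ t x) ≤ δ) → ∃ s : ℝ, |s| < ε ∧ y = φ s x) :
    {x : X | ∀ t : ℝ, φ t x = x}.Finite ∧
      ∀ x ∈ {x : X | ∀ t : ℝ, φ t x = x}, 𝓝[≠] x = ⊥ := by
  obtain ⟨δ, hδ, hδ'⟩ := hexp 1 one_pos
  have iso : ∀ x ∈ {x : X | ∀ t : ℝ, φ t x = x}, 𝓝[≠] x = ⊥ := by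
    intro x₀ hx₀
    have hU : ∀ᶠ y in 𝓝 x₀, ∀ t ∈ Set.Icc (-5:ℝ) 5, dist (φ t y) x₀ ≤ δ / 2 := by
      apply (isCompact_Icc : IsCompact (Set.Icc (-5:ℝ) 5)).eventually_forall_of_forall_eventually
      intro t _
      have hc : ContinuousAt (fun z : X × ℝ => dist (φ z.2 z.1) x₀) (x₀, t) :=
        (Continuous.dist (φ.continuous continuous_snd continuous_fst)
          continuous_const).continuousAt
      have hval : dist (φ t x₀) x₀ < δ / 2 := by
        rw [hx₀ t, dist_self]; linarith
      have hev := hc.eventually_lt continuousAt_const hval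
      exact hev.mono fun z hz => hz.le
    rw [← empty_mem_iff_bot]
    have hmem : ({y | ∀ t ∈ Set.Icc (-5:ℝ) 5, dist (φ t y) x₀ ≤ δ / 2} ∩ {x₀}ᶜ)
        ∈ 𝓝[≠] x₀ :=
      Filter.inter_mem (mem_nhdsWithin_of_mem_nhds hU) self_mem_nhdsWithin
    have hempty : ({y | ∀ t ∈ Set.Icc (-5:ℝ) 5, dist (φ t y) x₀ ≤ δ / 2} ∩ {x₀}ᶜ)
        = (∅ : Set X) := by
      ext y
      simp only [Set.mem_inter_iff, Set.mem_setOf_eq, Set.mem_compl_iff,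
        Set.mem_singleton_iff, Set.mem_empty_iff_false, iff_false, not_and, not_not]
      intro hy
      exact key_lemma φ hδ' hx₀ (fun t h1 h2 => hy t ⟨h1, h2⟩)
    rwa [hempty] at hmem
  refine ⟨?_, iso⟩
  have hclosed : IsClosed {x : X | ∀ t : ℝ, φ t x = x} := by
    have : {x : X | ∀ t : ℝ, φ t x = x} = ⋂ t : ℝ, {x | φ t x = x} := by
      ext x; simp
    rw [this]
    exact isClosed_iInter fun t =>
      isClosed_eq (φ.continuous continuous_const continuous_id) continuous_id
  have hopen : ∀ x ∈ {x : X | ∀ t : ℝ, φ t x = x}, IsOpen ({x} : Set X) := by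
    intro x hx
    have h := iso x hx
    have hx' : x ∉ closure ({x}ᶜ : Set X) :=
      notMem_closure_iff_nhdsWithin_eq_bot.mpr h
    rw [closure_compl] at hx'
    have hxint : x ∈ interior ({x} : Set X) := by simpa using hx'
    rw [isOpen_iff_mem_nhds]
    intro y hy
    rw [Set.mem_singleton_iff] at hy
    subst hy
    exact mem_interior_iff_mem_nhds.mp hxint
  have hcpt : IsCompact {x : X | ∀ t : ℝ, φ t x = x} := hclosed.isCompact
  obtain ⟨F, hF⟩ := hcpt.elim_finite_subcover
    (fun x : {x : X | ∀ t : ℝ, φ t x = x} => ({(x : X)} : Set X))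
    (fun x => hopen x x.2)
    (fun x hx => Set.mem_iUnion.mpr ⟨⟨x, hx⟩, rfl⟩)
  exact Set.Finite.subset (F.finite_toSet.biUnion fun i _ => Set.finite_singleton _) hF

/-- an expansive flow has finitely many fixed points, each isolated in `X`. -/
theorem stmt6 [MetricSpace X] [CompactSpace X] (φ : Flow ℝ X) (hexp : BWExpansive φ) :
    {x : X | ∀ t : ℝ, φ t x = x}.Finite ∧
      ∀ x ∈ {x : X | ∀ t : ℝ, φ t x = x}, 𝓝[≠] x = ⊥ := by
  exact stmt6' φ hexp
end

section
/- Let (h_n) be a sequence of continuous functions from an interval I containing 0 to ℝ with h_n(0) = 0, and suppose x_n → x, y_n → y, and φ_{h_n(t)}(y_n) ∈ H(φ_t(x_n)) for every n and every t ∈ I, where H is a continuous field of transversal sections of time τ for the regular flow φ on a compact metric space. Then (h_n) has a subsequence converging uniformly on compact subsets of I to a continuous function h : I → ℝ satisfying φ_{h(t)}(y) ∈ H(φ_t(x)) for every t ∈ I. -/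
/-!
Transversality makes the reparametrizations uniformly equicontinuous. If `h n` moved by
`ε ≤ τ` over a short time interval `[t, u]`, the point `q = φ (h n t) (ys n)` of
`H (φ t (xs n))` would have its translate `φ (h n u - h n t) q` in `H (φ u (xs n))`, with
`φ t (xs n)` and `φ u (xs n)` arbitrarily close. By compactness and continuity of `H`, a limit
of such configurations is a point `q ∈ H p` with `φ Δ q ∈ H p` and `ε ≤ |Δ| ≤ τ`, which the
injectivity of the flow on `[-τ, τ] × H p` forbids.

Equicontinuity together with `h n 0 = 0` bounds the `h n` pointwise, so Arzelà–Ascoli gives a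
locally uniformly convergent subsequence, and the limit still follows the sections because the
graph of `H` is closed.
-/

open Metric Set Filter Topology

variable {X : Type*}

theorem abs_sub_le_of_forall_dist_lt {I : Set ℝ} (hI : I.OrdConnected) {f : ℝ → ℝ} {δ C : ℝ}
    (hδ : 0 < δ) (hf : ∀ s ∈ I, ∀ t ∈ I, dist s t < δ → dist (f s) (f t) < C)
    {t₀ t : ℝ} (ht₀ : t₀ ∈ I) (ht : t ∈ I) :
    |f t - f t₀| ≤ (2 * |t - t₀| / δ + 1) * C := by
  have hC : 0 < C := by simpa using hf t₀ ht₀ t₀ ht₀ (by simpa using hδ)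
  have hchain : ∀ k : ℕ, ∀ t ∈ I, |t - t₀| ≤ k * (δ / 2) → |f t - f t₀| ≤ k * C := by
    intro k
    induction k with
    | zero =>
      intro t _ htk
      have : t = t₀ := sub_eq_zero.mp (abs_nonpos_iff.mp (by simpa using htk))
      simp [this]
    | succ k ih =>
      intro t ht htk
      -- step from `t` to `(1 - θ) * t₀ + θ * t`, a fraction `1 / (k + 1)` of the way to `t₀`
      set θ : ℝ := k / (k + 1)
      have hθ : θ * (k + 1) = k := div_mul_cancel₀ _ (by positivity)
      have hθ0 : 0 ≤ θ := by positivity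
      have hθ1 : θ ≤ 1 := div_le_one_of_le₀ (by linarith) (by positivity)
      have ht' : (1 - θ) * t₀ + θ * t ∈ I :=
        hI.convex ht₀ ht (by linarith) hθ0 (by ring)
      have hnear : dist t ((1 - θ) * t₀ + θ * t) < δ := by
        rw [Real.dist_eq, show t - ((1 - θ) * t₀ + θ * t) = (1 - θ) * (t - t₀) by ring, abs_mul,
          abs_of_nonneg (by linarith)]
        push_cast at htk
        nlinarith
      have hfar : |(1 - θ) * t₀ + θ * t - t₀| ≤ k * (δ / 2) := by
        rw [show (1 - θ) * t₀ + θ * t - t₀ = θ * (t - t₀) by ring, abs_mul, abs_of_nonneg hθ0]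
        push_cast at htk
        nlinarith
      have hstep := hf t ht _ ht' hnear
      rw [Real.dist_eq] at hstep
      calc |f t - f t₀| ≤ |f t - f ((1 - θ) * t₀ + θ * t)| + |f ((1 - θ) * t₀ + θ * t) - f t₀| :=
            abs_sub_le _ _ _
        _ ≤ C + k * C := add_le_add hstep.le (ih _ ht' hfar)
        _ = (k + 1 : ℕ) * C := by push_cast; ring
  set k := ⌈2 * |t - t₀| / δ⌉₊
  have hk : (k : ℝ) < 2 * |t - t₀| / δ + 1 := Nat.ceil_lt_add_one (by positivity)
  have htk : |t - t₀| ≤ k * (δ / 2) := by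
    have := Nat.le_ceil (2 * |t - t₀| / δ)
    rw [div_le_iff₀ hδ] at this
    linarith
  exact (hchain k t ht htk).trans (by gcongr)

theorem exists_subseq_tendsto_of_countable {α : Type*} {D : Set α} (hD : D.Countable)
    {f : ℕ → α → ℝ} (hbdd : ∀ d ∈ D, ∃ C, ∀ n, |f n d| ≤ C) :
    ∃ ψ : ℕ → ℕ, StrictMono ψ ∧ ∀ d ∈ D, ∃ c, Tendsto (fun n => f (ψ n) d) atTop (𝓝 c) := by
  have := hD.to_subtype
  choose C hC using fun d : D => hbdd d d.2
  obtain ⟨c, -, ψ, hψ, hc⟩ :=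
    (isCompact_univ_pi fun d : D => isCompact_Icc (a := -C d) (b := C d)).tendsto_subseq
      (x := fun n (d : D) => f n d) fun n d _ => abs_le.mp (hC d n)
  exact ⟨ψ, hψ, fun d hd => ⟨c ⟨d, hd⟩, tendsto_pi_nhds.mp hc ⟨d, hd⟩⟩⟩

section Equicontinuity

variable {α β : Type*} [PseudoMetricSpace α] [PseudoMetricSpace β] {I : Set α} {f : ℕ → α → β}

theorem cauchySeq_of_dense_of_forall_dist_lt
    (hequi : ∀ ε > 0, ∃ δ > 0, ∀ n, ∀ s ∈ I, ∀ t ∈ I, dist s t < δ → dist (f n s) (f n t) < ε)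
    {D : Set α} (hDI : D ⊆ I) (hID : I ⊆ closure D) (hD : ∀ d ∈ D, CauchySeq (f · d))
    {t : α} (ht : t ∈ I) : CauchySeq (f · t) := by
  refine Metric.cauchySeq_iff.mpr fun ε hε => ?_
  obtain ⟨δ, hδ, hmod⟩ := hequi (ε / 3) (by positivity)
  obtain ⟨d, hdD, htd⟩ := Metric.mem_closure_iff.mp (hID ht) δ hδ
  obtain ⟨N, hN⟩ := Metric.cauchySeq_iff.mp (hD d hdD) (ε / 3) (by positivity)
  refine ⟨N, fun m hm n hn => ?_⟩
  calc dist (f m t) (f n t) ≤ dist (f m t) (f m d) + dist (f m d) (f n d) + dist (f n d) (f n t) :=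
        dist_triangle4 _ _ _ _
    _ < ε / 3 + ε / 3 + ε / 3 := by
        gcongr
        · exact hmod m t ht d (hDI hdD) htd
        · exact hN m hm n hn
        · exact hmod n d (hDI hdD) t ht (by rwa [dist_comm])
    _ = ε := by ring

theorem tendstoLocallyUniformlyOn_of_forall_dist_lt
    (hequi : ∀ ε > 0, ∃ δ > 0, ∀ n, ∀ s ∈ I, ∀ t ∈ I, dist s t < δ → dist (f n s) (f n t) < ε)
    {g : α → β} (hg : ∀ t ∈ I, Tendsto (f · t) atTop (𝓝 (g t))) :
    TendstoLocallyUniformlyOn f g atTop I := by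
  refine Metric.tendstoLocallyUniformlyOn_iff.mpr fun ε hε t ht => ?_
  obtain ⟨δ, hδ, hmod⟩ := hequi (ε / 3) (by positivity)
  have hgmod : ∀ s ∈ I, dist s t < δ → dist (g s) (g t) ≤ ε / 3 := fun s hs hst =>
    le_of_tendsto ((hg s hs).dist (hg t ht))
      (Eventually.of_forall fun n => (hmod n s hs t ht hst).le)
  refine ⟨I ∩ Metric.ball t δ, inter_mem_nhdsWithin I (Metric.ball_mem_nhds t hδ), ?_⟩
  filter_upwards [Metric.tendsto_nhds.mp (hg t ht) (ε / 3) (by positivity)] with n hn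
  rintro s ⟨hs, hst⟩
  have hst : dist s t < δ := hst
  linarith [dist_triangle4 (g s) (g t) (f n t) (f n s), hgmod s hs hst, dist_comm (g t) (f n t),
    hmod n t ht s hs (by rwa [dist_comm])]

end Equicontinuity

theorem exists_subseq_tendstoLocallyUniformlyOn {α : Type*} [PseudoMetricSpace α]
    [TopologicalSpace.SeparableSpace α] {I : Set α} {f : ℕ → α → ℝ}
    (hbdd : ∀ t ∈ I, ∃ C, ∀ n, |f n t| ≤ C)
    (hequi : ∀ ε > 0, ∃ δ > 0, ∀ n, ∀ s ∈ I, ∀ t ∈ I, dist s t < δ → dist (f n s) (f n t) < ε) :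
    ∃ (ψ : ℕ → ℕ) (g : α → ℝ), StrictMono ψ ∧ ContinuousOn g I ∧
      TendstoLocallyUniformlyOn (fun n => f (ψ n)) g atTop I := by
  obtain ⟨D, hDI, hDc, hID⟩ :=
    (TopologicalSpace.IsSeparable.of_separableSpace I).exists_countable_dense_subset
  obtain ⟨ψ, hψ, hD⟩ := exists_subseq_tendsto_of_countable hDc fun d hd => hbdd d (hDI hd)
  have hequiψ : ∀ ε > 0, ∃ δ > 0, ∀ n, ∀ s ∈ I, ∀ t ∈ I, dist s t < δ →
      dist (f (ψ n) s) (f (ψ n) t) < ε := fun ε hε =>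
    (hequi ε hε).imp fun δ ⟨hδ, hmod⟩ => ⟨hδ, fun n => hmod (ψ n)⟩
  have hcauchy : ∀ t ∈ I, CauchySeq (fun n => f (ψ n) t) :=
    fun t => cauchySeq_of_dense_of_forall_dist_lt hequiψ hDI hID
      (fun d hd => (hD d hd).elim fun _ hc => hc.cauchySeq)
  have hconv := tendstoLocallyUniformlyOn_of_forall_dist_lt hequiψ
    (g := fun t => limUnder atTop fun n => f (ψ n) t) fun t ht => (hcauchy t ht).tendsto_limUnder
  refine ⟨ψ, _, hψ, hconv.continuousOn (Frequently.of_forall fun n => ?_), hconv⟩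
  exact Metric.continuousOn_iff.mpr fun t ht ε hε =>
    (hequiψ ε hε).imp fun δ ⟨hδ, hmod⟩ => ⟨hδ, fun s hs hst => hmod n s hs t ht hst⟩

theorem Filter.Tendsto.flow {ι τ α : Type*} [TopologicalSpace τ] [AddZero τ]
    [TopologicalSpace α] (φ : Flow τ α) {l : Filter ι} {u : ι → τ} {z : ι → α} {t : τ} {x : α}
    (hu : Tendsto u l (𝓝 t)) (hz : Tendsto z l (𝓝 x)) :
    Tendsto (fun i => φ (u i) (z i)) l (𝓝 (φ t x)) :=
  (φ.cont'.tendsto (t, x)).comp (hu.prodMk_nhds hz)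

theorem Flow.exists_forall_dist_lt [MetricSpace X] [CompactSpace X] (φ : Flow ℝ X) {η : ℝ}
    (hη : 0 < η) : ∃ δ > 0, ∀ u : ℝ, |u| < δ → ∀ z : X, dist (φ u z) z < η := by
  obtain ⟨v, hv, hvη⟩ := isCompact_univ.mem_uniformity_of_prod (f := fun t (z : X) => φ t z)
    φ.cont'.continuousOn (mem_univ (0 : ℝ)) (dist_mem_uniformity hη)
  rw [nhdsWithin_univ] at hv
  obtain ⟨δ, hδ, hball⟩ := Metric.mem_nhds_iff.mp hv
  refine ⟨δ, hδ, fun u hu z => ?_⟩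
  simpa [φ.map_zero_apply] using hvη u (hball (by simpa using hu)) z (mem_univ z)

namespace SecField

variable [MetricSpace X] {φ : Flow ℝ X} {τ : ℝ} (F : SecField φ τ)

theorem isClosed_graph (hcont : SecFieldContinuous φ F) : IsClosed {w : X × X | w.2 ∈ F.H w.1} := by
  refine isClosed_iff_forall_filter.mpr fun ⟨p, z⟩ l _ hl hlim => ?_
  have hp : Tendsto Prod.fst l (𝓝 p) := (continuous_fst.tendsto _).mono_left hlim
  have hz : Tendsto Prod.snd l (𝓝 z) := (continuous_snd.tendsto _).mono_left hlim
  have hne : ∀ x, (F.H x).Nonempty := fun x => ⟨x, F.mem_self x⟩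
  have hle : ∀ᶠ w in l, infDist w.2 (F.H p) ≤ hausdorffDist (F.H w.1) (F.H p) := by
    filter_upwards [le_principal_iff.mp hl] with w hw
    exact infDist_le_hausdorffDist_of_mem hw (hausdorffEDist_ne_top_of_nonempty_of_bounded
      (hne _) (hne _) (F.compactH _).isBounded (F.compactH _).isBounded)
  have h0 : Tendsto (fun w : X × X => infDist w.2 (F.H p)) l (𝓝 0) :=
    squeeze_zero' (Eventually.of_forall fun _ => infDist_nonneg) hle ((hcont p).comp hp)
  have h1 : Tendsto (fun w : X × X => infDist w.2 (F.H p)) l (𝓝 (infDist z (F.H p))) :=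
    ((continuous_infDist_pt _).tendsto z).comp hz
  exact ((F.compactH p).isClosed.mem_iff_infDist_zero (hne p)).mpr (tendsto_nhds_unique h1 h0)

theorem eq_zero_of_flow_mem {p q : X} {Δ : ℝ} (hq : q ∈ F.H p) (hΔq : φ Δ q ∈ F.H p)
    (hΔ : |Δ| ≤ τ) : Δ = 0 := by
  have hτ : 0 ≤ τ := (abs_nonneg Δ).trans hΔ
  have := @F.inj p (Δ, q) ⟨abs_le.mp hΔ, hq⟩ (0, φ Δ q) ⟨⟨by linarith, hτ⟩, hΔq⟩
    (φ.map_zero_apply _).symm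
  exact congrArg Prod.fst this

theorem exists_pos_lt_dist_of_flow_mem [CompactSpace X] (hcont : SecFieldContinuous φ F) {ε : ℝ}
    (hε : 0 < ε) : ∃ η > 0, ∀ p p' q : X, ∀ Δ : ℝ, q ∈ F.H p → φ Δ q ∈ F.H p' →
      ε ≤ |Δ| → |Δ| ≤ τ → η < dist p p' := by
  set K : Set ((X × X) × X × ℝ) := {w | w.2.1 ∈ F.H w.1.1 ∧ φ w.2.2 w.2.1 ∈ F.H w.1.2 ∧
    ε ≤ |w.2.2| ∧ |w.2.2| ≤ τ}
  have hgraph := F.isClosed_graph hcont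
  have hΔ : Continuous fun w : (X × X) × X × ℝ => w.2.2 := by fun_prop
  have hKclosed : IsClosed K :=
    (hgraph.preimage (f := fun w : (X × X) × X × ℝ => (w.1.1, w.2.1)) (by fun_prop)).inter <|
      (hgraph.preimage (f := fun w : (X × X) × X × ℝ => (w.1.2, φ w.2.2 w.2.1))
        ((continuous_snd.comp continuous_fst).prodMk (φ.continuous hΔ (by fun_prop)))).inter <|
      (isClosed_le continuous_const hΔ.abs).inter (isClosed_le hΔ.abs continuous_const)
  have hKcompact : IsCompact K :=
    (isCompact_univ.prod (isCompact_univ.prod isCompact_Icc)).of_isClosed_subset hKclosed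
      fun w hw => ⟨mem_univ _, mem_univ _, abs_le.mp hw.2.2.2⟩
  have hpos : ∀ w ∈ K, 0 < dist w.1.1 w.1.2 := by
    rintro ⟨⟨p, p'⟩, q, Δ⟩ ⟨hq, hΔq, hεΔ, hΔτ⟩
    refine dist_pos.mpr fun hpp' : p = p' => ?_
    subst hpp'
    have hΔ : Δ = 0 := F.eq_zero_of_flow_mem hq hΔq hΔτ
    rw [hΔ, abs_zero] at hεΔ
    exact hε.not_ge hεΔ
  obtain ⟨η, hη, hηK⟩ := hKcompact.exists_forall_le' (by fun_prop) hpos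
  exact ⟨η / 2, by positivity, fun p p' q Δ hq hΔq hεΔ hΔτ =>
    (half_lt_self hη).trans_le (hηK ((p, p'), q, Δ) ⟨hq, hΔq, hεΔ, hΔτ⟩)⟩

theorem exists_dist_lt_of_forall_flow_mem [CompactSpace X] (hτ : 0 < τ)
    (hcont : SecFieldContinuous φ F) {ε : ℝ} (hε : 0 < ε) :
    ∃ δ > 0, ∀ (α : ℝ → ℝ) (a b : X) (s t : ℝ), dist s t < δ → ContinuousOn α (uIcc t s) →
      (∀ u ∈ uIcc t s, φ (α u) b ∈ F.H (φ u a)) → dist (α s) (α t) < ε := by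
  obtain ⟨η, hη, hsep⟩ := F.exists_pos_lt_dist_of_flow_mem hcont (lt_min hε hτ)
  obtain ⟨δ, hδ, hflow⟩ := φ.exists_forall_dist_lt hη
  refine ⟨δ, hδ, fun α a b s t hst hα hmem => ?_⟩
  by_contra! hge
  have hε' : min ε τ ∈ uIcc |α t - α t| |α s - α t| := by
    rw [sub_self, abs_zero, uIcc_of_le (abs_nonneg _)]
    exact ⟨(lt_min hε hτ).le, (min_le_left _ _).trans (by rwa [← Real.dist_eq])⟩
  obtain ⟨u, hu, hαu⟩ := intermediate_value_uIcc ((hα.sub continuousOn_const).abs) hε'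
  have hut : |u - t| < δ := (abs_sub_left_of_mem_uIcc hu).trans_lt (by rwa [← Real.dist_eq])
  have hnear : dist (φ u a) (φ t a) < η := by
    simpa only [← φ.map_add, sub_add_cancel] using hflow (u - t) hut (φ t a)
  have hjump : φ (α u - α t) (φ (α t) b) ∈ F.H (φ u a) := by
    rw [← φ.map_add, sub_add_cancel]
    exact hmem u hu
  refine (hsep _ _ _ _ (hmem t left_mem_uIcc) hjump hαu.ge
    (hαu.le.trans (min_le_right _ _))).not_gt ?_
  rwa [dist_comm]

end SecField

theorem stmt8_general [MetricSpace X] [CompactSpace X] (φ : Flow ℝ X)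
    (τ : ℝ) (hτ : 0 < τ) (F : SecField φ τ) (hcont : SecFieldContinuous φ F)
    (I : Set ℝ) (hI : I.OrdConnected) (h0I : (0:ℝ) ∈ I)
    (h : ℕ → ℝ → ℝ) (hhc : ∀ n, ContinuousOn (h n) I) (hh0 : ∀ n, h n 0 = 0)
    (x y : X) (xs ys : ℕ → X)
    (hxs : Filter.Tendsto xs Filter.atTop (nhds x))
    (hys : Filter.Tendsto ys Filter.atTop (nhds y))
    (hsec : ∀ n : ℕ, ∀ t ∈ I, φ (h n t) (ys n) ∈ F.H (φ t (xs n))) :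
    ∃ (ψ : ℕ → ℕ) (g : ℝ → ℝ), StrictMono ψ ∧ ContinuousOn g I ∧
      TendstoLocallyUniformlyOn (fun n => h (ψ n)) g Filter.atTop I ∧
      ∀ t ∈ I, φ (g t) y ∈ F.H (φ t x) := by
  have hequi : ∀ ε > 0, ∃ δ > 0, ∀ n, ∀ s ∈ I, ∀ t ∈ I, dist s t < δ →
      dist (h n s) (h n t) < ε := fun ε hε =>
    (F.exists_dist_lt_of_forall_flow_mem hτ hcont hε).imp fun δ ⟨hδ, hmod⟩ =>
      ⟨hδ, fun n s hs t ht hst => hmod (h n) (xs n) (ys n) s t hst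
        ((hhc n).mono (hI.uIcc_subset ht hs)) fun u hu => hsec n u (hI.uIcc_subset ht hs hu)⟩
  have hbdd : ∀ t ∈ I, ∃ C, ∀ n, |h n t| ≤ C := by
    obtain ⟨δ, hδ, hmod⟩ := hequi 1 one_pos
    exact fun t ht => ⟨2 * |t| / δ + 1, fun n => by
      simpa [hh0] using abs_sub_le_of_forall_dist_lt hI hδ (hmod n) h0I ht⟩
  obtain ⟨ψ, g, hψ, hg, hconv⟩ := exists_subseq_tendstoLocallyUniformlyOn hbdd hequi
  refine ⟨ψ, g, hψ, hg, hconv, fun t ht => ?_⟩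
  have hlim := ((tendsto_const_nhds (x := t)).flow φ (hxs.comp hψ.tendsto_atTop)).prodMk_nhds
    ((hconv.tendsto_at ht).flow φ (hys.comp hψ.tendsto_atTop))
  exact (F.isClosed_graph hcont).mem_of_tendsto hlim
    (Eventually.of_forall fun n => hsec (ψ n) t ht)

/-- convergence of reparametrizations along a field of sections. -/
theorem stmt8 [MetricSpace X] [CompactSpace X] (φ : Flow ℝ X) (hnofix : NoFixedPoints φ)
    (τ : ℝ) (hτ : 0 < τ) (F : SecField φ τ) (hcont : SecFieldContinuous φ F)
    (I : Set ℝ) (hI : I.OrdConnected) (h0I : (0:ℝ) ∈ I)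
    (h : ℕ → ℝ → ℝ) (hhc : ∀ n, ContinuousOn (h n) I) (hh0 : ∀ n, h n 0 = 0)
    (x y : X) (xs ys : ℕ → X)
    (hxs : Filter.Tendsto xs Filter.atTop (nhds x))
    (hys : Filter.Tendsto ys Filter.atTop (nhds y))
    (hsec : ∀ n : ℕ, ∀ t ∈ I, φ (h n t) (ys n) ∈ F.H (φ t (xs n))) :
    ∃ (ψ : ℕ → ℕ) (g : ℝ → ℝ), StrictMono ψ ∧ ContinuousOn g I ∧
      TendstoLocallyUniformlyOn (fun n => h (ψ n)) g Filter.atTop I ∧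
      ∀ t ∈ I, φ (g t) y ∈ F.H (φ t x) :=
  stmt8_general φ τ hτ F hcont I hI h0I h hhc hh0 x y xs ys hxs hys hsec
end
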